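/- arXiv:1607.06310 — 4 statements merged into one kernel-verified Lean document; each statement's English description precedes it below -/
import Mathlib

section
/- Let α ∈ (0,1) and 0 < C ≤ 1/4. Suppose ψ : S¹ → S¹ satisfies |ψ(ζ) − ζ| ≤ C·|ζ − 1|^{α+1} for every ζ ∈ S¹. Let ε > 0 and let t ∈ [0,1) satisfy 1 − t ≤ (1/4)·(ε/(4C))^{1/α}. Then for every ζ ∈ S¹ one has |h_t^{-1}(ψ(h_t(ζ))) − ζ| ≤ ε. -/
/-!
Writing `w = h_t ζ`, the distortion formula
`h_t⁻¹ a - h_t⁻¹ b = (a - b)(1 - t²) / ((1 - t a)(1 - t b))` reduces the claim to an estimate at `w`.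
On the circle `|1 - t z| ≥ max (1 - t) (|1 - z| / 2)`, and since `C ≤ 1/4` the map `ψ` moves `w` by
at most `s / 2`, where `s = |1 - w|`; so both denominators are at least of order `max (1 - t) s`,
while the numerator is at most `C s^(α+1) · 2(1 - t)`. With `δ = (ε / 4C)^(1/α)`, the quotient is
at most `ε`: for `s ≤ δ` because `s^α ≤ δ^α`, and for `s ≥ δ` because `s^α δ ≤ δ^α s` (as `α ≤ 1`)
and `1 - t ≤ δ / 4`.
-/

/-- The Möbius transformation `h_t(z) = (z + t)/(1 + t z)` of the unit disk,
for a real parameter `t`.  Its inverse is `h_{-t}`. -/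
noncomputable def mobH (t : ℝ) (z : ℂ) : ℂ := (z + (t : ℂ)) / (1 + (t : ℂ) * z)

open ComplexConjugate

lemma mobH_neg (t : ℝ) (z : ℂ) : mobH (-t) z = (z - t) / (1 - t * z) := by
  simp only [mobH, Complex.ofReal_neg, neg_mul, ← sub_eq_add_neg]

lemma mobH_neg_mobH {t : ℝ} (ht : |t| < 1) {z : ℂ} (hz : 1 + t * z ≠ 0) :
    mobH (-t) (mobH t z) = z := by
  have ht2 : (1 : ℂ) - t ^ 2 ≠ 0 := by
    have : t ^ 2 < 1 := by rw [← sq_abs]; nlinarith [abs_nonneg t]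
    exact_mod_cast (sub_pos.2 this).ne'
  have hnum : (z + t) / (1 + t * z) - t = z * (1 - t ^ 2) / (1 + t * z) := by
    rw [eq_div_iff hz, sub_mul, div_mul_cancel₀ _ hz]
    ring
  have hden : 1 - t * ((z + t) / (1 + t * z)) = (1 - t ^ 2) / (1 + t * z) := by
    rw [eq_div_iff hz, sub_mul, mul_assoc, div_mul_cancel₀ _ hz]
    ring
  rw [mobH_neg, mobH, hnum, hden, div_div_div_cancel_right₀ hz, mul_div_assoc, div_self ht2,
    mul_one]

lemma mobH_neg_sub_mobH_neg (t : ℝ) {a b : ℂ} (ha : 1 - t * a ≠ 0) (hb : 1 - t * b ≠ 0) :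
    mobH (-t) a - mobH (-t) b = (a - b) * (1 - t ^ 2) / ((1 - t * a) * (1 - t * b)) := by
  rw [mobH_neg, mobH_neg, div_sub_div _ _ ha hb]
  ring

lemma norm_add_ofReal_eq_norm_one_add_mul {z : ℂ} (hz : ‖z‖ = 1) (t : ℝ) :
    ‖z + t‖ = ‖1 + t * z‖ := by
  have : 1 + t * z = z * conj (z + t) := by
    rw [map_add, Complex.conj_ofReal, mul_add, Complex.mul_conj', hz]
    push_cast
    ring
  rw [this, norm_mul, hz, one_mul, Complex.norm_conj]

lemma one_sub_abs_le_norm_one_sub_mul (t : ℝ) {z : ℂ} (hz : ‖z‖ ≤ 1) :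
    1 - |t| ≤ ‖1 - t * z‖ :=
  calc 1 - |t| ≤ 1 - |t| * ‖z‖ := by gcongr; exact mul_le_of_le_one_right (abs_nonneg t) hz
    _ = ‖(1 : ℂ)‖ - ‖(t : ℂ) * z‖ := by simp
    _ ≤ ‖1 - t * z‖ := norm_sub_norm_le _ _

lemma one_sub_mul_ne_zero {t : ℝ} (ht : |t| < 1) {z : ℂ} (hz : ‖z‖ ≤ 1) : 1 - t * z ≠ 0 :=
  norm_pos_iff.1 ((sub_pos.2 ht).trans_le (one_sub_abs_le_norm_one_sub_mul t hz))

lemma one_add_mul_ne_zero {t : ℝ} (ht : |t| < 1) {z : ℂ} (hz : ‖z‖ ≤ 1) : 1 + t * z ≠ 0 := by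
  simpa using one_sub_mul_ne_zero ht (z := -z) (by simpa using hz)

lemma norm_mobH {t : ℝ} (ht : |t| < 1) {z : ℂ} (hz : ‖z‖ = 1) : ‖mobH t z‖ = 1 := by
  rw [mobH, norm_div, norm_add_ofReal_eq_norm_one_add_mul hz,
    div_self (norm_ne_zero_iff.2 (one_add_mul_ne_zero ht hz.le))]

lemma norm_mobH_neg_sub_mobH_neg {t : ℝ} (ht : |t| < 1) {a b : ℂ} (ha : ‖a‖ ≤ 1) (hb : ‖b‖ ≤ 1) :
    ‖mobH (-t) a - mobH (-t) b‖ = ‖a - b‖ * (1 - t ^ 2) / (‖1 - t * a‖ * ‖1 - t * b‖) := by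
  have ht2 : 0 ≤ 1 - t ^ 2 := by rw [← sq_abs]; nlinarith [abs_nonneg t]
  rw [mobH_neg_sub_mobH_neg t (one_sub_mul_ne_zero ht ha) (one_sub_mul_ne_zero ht hb), norm_div,
    norm_mul, norm_mul]
  norm_cast
  rw [Real.norm_of_nonneg ht2]

lemma norm_one_sub_sub_le {t : ℝ} (ht : t ≤ 1) {z : ℂ} (hz : ‖z‖ ≤ 1) :
    ‖1 - z‖ - (1 - t) ≤ ‖1 - t * z‖ := by
  have h : ‖t * z - z‖ ≤ 1 - t := by
    rw [show (t : ℂ) * z - z = ((t - 1 : ℝ) : ℂ) * z by push_cast; ring, norm_mul,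
      Complex.norm_real, Real.norm_of_nonpos (sub_nonpos.2 ht)]
    nlinarith [mul_le_mul_of_nonneg_left hz (sub_nonneg.2 ht)]
  linarith [norm_sub_le_norm_sub_add_norm_sub 1 (t * z) z]

lemma max_le_norm_one_sub_mul {t : ℝ} (ht0 : 0 ≤ t) (ht1 : t ≤ 1) {z : ℂ} (hz : ‖z‖ ≤ 1) :
    max (1 - t) (‖1 - z‖ / 2) ≤ ‖1 - t * z‖ := by
  have h := one_sub_abs_le_norm_one_sub_mul t hz
  rw [abs_of_nonneg ht0] at h
  exact max_le h (by linarith [norm_one_sub_sub_le ht1 hz])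

lemma max_le_norm_one_sub_mul_of_norm_sub_le {t : ℝ} (ht0 : 0 ≤ t) (ht1 : t ≤ 1) {z z' : ℂ}
    (hz' : ‖z'‖ ≤ 1) (hzz' : ‖z' - z‖ ≤ ‖1 - z‖ / 2) :
    max (1 - t) (1 / 4 * ‖1 - z‖) ≤ ‖1 - t * z'‖ := by
  refine le_trans ?_ (max_le_norm_one_sub_mul ht0 ht1 hz')
  have : ‖1 - z‖ - ‖z' - z‖ ≤ ‖1 - z'‖ := by
    simpa using norm_sub_norm_le (1 - z) (z' - z)
  gcongr
  linarith

lemma rpow_mul_le_rpow_mul_of_le {α δ s : ℝ} (hα : α ≤ 1) (hδ : 0 < δ) (hδs : δ ≤ s) :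
    s ^ α * δ ≤ δ ^ α * s := by
  have h := Real.rpow_le_self_of_one_le ((one_le_div hδ).2 hδs) hα
  rw [Real.div_rpow (hδ.le.trans hδs) hδ.le, div_le_div_iff₀ (by positivity) hδ] at h
  linarith

lemma rpow_mul_le_rpow_mul_max {α δ s u k : ℝ} (hα0 : 0 ≤ α) (hα1 : α ≤ 1) (hδ : 0 < δ)
    (hs : 0 ≤ s) (hu : 0 ≤ u) (hk : 0 ≤ k) (huδ : u ≤ k * δ) :
    s ^ α * u ≤ δ ^ α * max u (k * s) := by
  rcases le_total s δ with h | h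
  · calc s ^ α * u ≤ δ ^ α * u := by gcongr
      _ ≤ δ ^ α * max u (k * s) := by gcongr; exact le_max_left _ _
  · calc s ^ α * u ≤ s ^ α * (k * δ) := by gcongr
      _ = k * (s ^ α * δ) := by ring
      _ ≤ k * (δ ^ α * s) := mul_le_mul_of_nonneg_left (rpow_mul_le_rpow_mul_of_le hα1 hδ h) hk
      _ = δ ^ α * (k * s) := by ring
      _ ≤ δ ^ α * max u (k * s) := by gcongr; exact le_max_right _ _

lemma mul_rpow_add_one_le_half {α C s : ℝ} (hα0 : 0 ≤ α) (hα1 : α ≤ 1) (hC : C ≤ 1 / 4)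
    (hs0 : 0 ≤ s) (hs2 : s ≤ 2) : C * s ^ (α + 1) ≤ s / 2 := by
  have hsα : s ^ α ≤ 2 :=
    (Real.rpow_le_rpow hs0 hs2 hα0).trans (Real.rpow_le_self_of_one_le one_le_two hα1)
  have : C * s ^ α ≤ 1 / 2 := by
    nlinarith [mul_le_mul_of_nonneg_right hC (Real.rpow_nonneg hs0 α)]
  rw [Real.rpow_add_one' hs0 (by linarith), ← mul_assoc]
  nlinarith

lemma mul_rpow_add_one_mul_le {α C δ s u : ℝ} (hα0 : 0 ≤ α) (hα1 : α ≤ 1) (hC : 0 ≤ C)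
    (hδ : 0 < δ) (hs : 0 ≤ s) (hu : 0 ≤ u) (huδ : u ≤ 1 / 4 * δ) :
    C * s ^ (α + 1) * (2 * u) ≤ 4 * C * δ ^ α * (max u (1 / 4 * s) * (s / 2)) :=
  calc C * s ^ (α + 1) * (2 * u) = 2 * C * s * (s ^ α * u) := by
        rw [Real.rpow_add_one' hs (by linarith)]
        ring
    _ ≤ 2 * C * s * (δ ^ α * max u (1 / 4 * s)) :=
        mul_le_mul_of_nonneg_left
          (rpow_mul_le_rpow_mul_max hα0 hα1 hδ hs hu (by norm_num) huδ) (by positivity)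
    _ = 4 * C * δ ^ α * (max u (1 / 4 * s) * (s / 2)) := by ring

/-- If `ψ : S¹ → S¹` satisfies `|ψ(ζ) − ζ| ≤ C·|ζ − 1|^(α+1)` with
`0 < C ≤ 1/4`, and `t ∈ [0,1)` with `1 − t ≤ (1/4)·(ε/(4C))^(1/α)`, then
`|h_t⁻¹(ψ(h_t(ζ))) − ζ| ≤ ε` for every `ζ ∈ S¹`. -/
theorem stmt_1 (α C : ℝ) (hα : 0 < α) (hα1 : α < 1) (hC : 0 < C) (hC4 : C ≤ 1 / 4)
    (ψ : ℂ → ℂ) (hmaps : ∀ ζ : ℂ, ‖ζ‖ = 1 → ‖ψ ζ‖ = 1)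
    (hψ : ∀ ζ : ℂ, ‖ζ‖ = 1 →
      ‖ψ ζ - ζ‖ ≤ C * (‖ζ - 1‖) ^ (α + 1))
    (ε : ℝ) (hε : 0 < ε) (t : ℝ) (ht0 : 0 ≤ t) (ht1 : t < 1)
    (htε : 1 - t ≤ (1 / 4) * (ε / (4 * C)) ^ (1 / α)) :
    ∀ ζ : ℂ, ‖ζ‖ = 1 →
      ‖mobH (-t) (ψ (mobH t ζ)) - ζ‖ ≤ ε := by
  intro ζ hζ
  have ht : |t| < 1 := abs_lt.2 ⟨by linarith, ht1⟩
  have hinv : mobH (-t) (mobH t ζ) = ζ :=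
    mobH_neg_mobH ht (one_add_mul_ne_zero ht hζ.le)
  set w := mobH t ζ
  have hw : ‖w‖ = 1 := norm_mobH ht hζ
  have hψw : ‖ψ w‖ = 1 := hmaps w hw
  set s := ‖1 - w‖
  have hδα : ((ε / (4 * C)) ^ (1 / α)) ^ α = ε / (4 * C) := by
    rw [one_div, Real.rpow_inv_rpow (by positivity) hα.ne']
  set δ := (ε / (4 * C)) ^ (1 / α)
  have hE : ‖ψ w - w‖ ≤ C * s ^ (α + 1) := by
    simpa only [norm_sub_rev w 1] using hψ w hw
  have hEs : ‖ψ w - w‖ ≤ s / 2 := hE.trans <| mul_rpow_add_one_le_half hα.le hα1.le hC4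
    (norm_nonneg _) ((norm_sub_le _ _).trans (by rw [norm_one, hw]; norm_num))
  have hQ : max (1 - t) (s / 2) ≤ ‖1 - t * w‖ := max_le_norm_one_sub_mul ht0 ht1.le hw.le
  have hP : max (1 - t) (1 / 4 * s) ≤ ‖1 - t * ψ w‖ :=
    max_le_norm_one_sub_mul_of_norm_sub_le ht0 ht1.le hψw.le hEs
  have hu : 0 < 1 - t := sub_pos.2 ht1
  rw [← hinv, norm_mobH_neg_sub_mobH_neg ht hψw.le hw.le,
    div_le_iff₀ (mul_pos (hu.trans_le ((le_max_left _ _).trans hP))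
      (hu.trans_le ((le_max_left _ _).trans hQ)))]
  calc ‖ψ w - w‖ * (1 - t ^ 2) ≤ C * s ^ (α + 1) * (2 * (1 - t)) :=
        mul_le_mul hE (by nlinarith) (by nlinarith) (by positivity)
    _ ≤ 4 * C * δ ^ α * (max (1 - t) (1 / 4 * s) * (s / 2)) :=
        mul_rpow_add_one_mul_le hα.le hα1.le hC.le (by positivity) (norm_nonneg _) hu.le htε
    _ ≤ ε * (‖1 - t * ψ w‖ * ‖1 - t * w‖) := by
        rw [hδα, mul_div_cancel₀ _ (by positivity)]
        gcongr
        exact (le_max_right _ _).trans hQ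
end

section
/- Let ε > 0 and let φ : S¹ → S¹ be continuous with d_{S¹}(φ(ζ), ζ) < ε for every ζ ∈ S¹. Then for every w in the open unit disk 𝔻, one has |ξ_φ(w) − ξ_id(w)| < 2ε; equivalently, since ξ_id(w) = −w, |ξ_φ(w) + w| < 2ε. -/
/-!
The Blaschke factor `B_w z = (z - w) / (1 - w̄ z)` maps the unit circle to itself, and the speed of
`t ↦ B_w(e^{it})` is the Poisson kernel `P_w(e^{it})`. Writing `φ(e^{ix}) = e^{i(x + θ)}` with
`|θ| < ε`, the distance `|B_w(φ(e^{ix})) - B_w(e^{ix})|` is therefore less than the `P_w`-mass of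
the arc `[x - ε, x + ε]`. Averaging over `x`, each point of the circle lies in arcs of total
length `2ε`, and `P_w` has average `1` (Poisson formula for the constant `1`), so
`|ξ_φ(w) - ξ_id(w)| < 2ε`. Finally `ξ_id(w) = B_w(0) = -w` by the mean value property.
-/

/-- Arc-length distance on the unit circle: the infimum of `|x₁ − x₂|` over
representatives `ζ₁ = e^{ix₁}`, `ζ₂ = e^{ix₂}`. -/
noncomputable def dS1 (ζ₁ ζ₂ : ℂ) : ℝ :=
  sInf {d : ℝ | ∃ x₁ x₂ : ℝ, ζ₁ = Complex.exp (Complex.I * (x₁ : ℂ)) ∧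
    ζ₂ = Complex.exp (Complex.I * (x₂ : ℂ)) ∧ d = |x₁ - x₂|}

/-- The average `ξ_φ(w) = (1/2π)·∫₀^{2π} (φ(e^{ix}) − w)/(1 − w̄·φ(e^{ix})) dx`
of a circle map `φ` taken at `w` in the unit disk. -/
noncomputable def avgMap (φ : ℂ → ℂ) (w : ℂ) : ℂ :=
  (1 / (2 * Real.pi)) • ∫ x in (0 : ℝ)..(2 * Real.pi),
    (φ (Complex.exp (Complex.I * (x : ℂ))) - w) /
      (1 - (starRingEnd ℂ) w * φ (Complex.exp (Complex.I * (x : ℂ))))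

open Complex Metric Real Set MeasureTheory intervalIntegral
open scoped ComplexConjugate

lemma norm_sub_le_abs_integral_norm_deriv {E : Type*} [NormedAddCommGroup E] [NormedSpace ℝ E]
    [CompleteSpace E] {f f' : ℝ → E} (hf : ∀ t, HasDerivAt f (f' t) t) (hf' : Continuous f')
    (a b : ℝ) : ‖f b - f a‖ ≤ |∫ t in a..b, ‖f' t‖| := by
  rw [← integral_eq_sub_of_hasDerivAt (fun t _ => hf t) (hf'.intervalIntegrable a b)]
  exact norm_integral_le_abs_integral_norm

lemma integral_comp_add_right_of_add_period {E : Type*} [NormedAddCommGroup E] [NormedSpace ℝ E]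
    [CompleteSpace E] {g : ℝ → E} (hg : Continuous g) {T : ℝ} {A : E}
    (hgT : ∀ u, g (u + T) = g u + A) (t c : ℝ) :
    ∫ x in t..t + T, g (x + c) = (∫ x in t..t + T, g x) + c • A := by
  have hi : ∀ a b, IntervalIntegrable g volume a b := fun _ _ => hg.intervalIntegrable _ _
  have hshift : ∫ x in t + T..t + T + c, g x = (∫ x in t..t + c, g x) + c • A := by
    rw [← add_right_comm, ← integral_comp_add_right, integral_congr fun u _ => hgT u,
      integral_add (hi _ _) intervalIntegrable_const, intervalIntegral.integral_const,
      add_sub_cancel_left]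
  rw [integral_comp_add_right, ← integral_add_adjacent_intervals (hi _ (t + T)) (hi _ _), hshift,
    ← add_assoc, add_comm (∫ x in t + c..t + T, g x),
    integral_add_adjacent_intervals (hi _ _) (hi _ _)]

noncomputable def blaschkeFactor (w z : ℂ) : ℂ := (z - w) / (1 - conj w * z)

section BlaschkeFactor

variable {w z : ℂ}

lemma one_sub_conj_mul_ne_zero (hw : ‖w‖ < 1) (hz : ‖z‖ ≤ 1) : 1 - conj w * z ≠ 0 := by
  have hlt : ‖conj w * z‖ < 1 := by
    rw [norm_mul, norm_conj]
    nlinarith [norm_nonneg w, norm_nonneg z]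
  intro h
  rw [← sub_eq_zero.1 h, norm_one] at hlt
  exact hlt.false

lemma norm_one_sub_conj_mul (hz : ‖z‖ = 1) : ‖1 - conj w * z‖ = ‖z - w‖ := by
  have hzz : conj z * z = 1 := by rw [conj_mul', hz]; simp
  calc ‖1 - conj w * z‖ = ‖conj z * (z - w)‖ := by
        rw [← norm_conj, map_sub, map_mul, conj_conj, map_one, mul_sub, hzz, mul_comm]
    _ = ‖z - w‖ := by rw [norm_mul, norm_conj, hz, one_mul]

lemma blaschkeFactor_zero_right : blaschkeFactor w 0 = -w := by
  simp [blaschkeFactor]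

lemma hasDerivAt_blaschkeFactor (h : 1 - conj w * z ≠ 0) :
    HasDerivAt (blaschkeFactor w) (((1 - ‖w‖ ^ 2 : ℝ) : ℂ) / (1 - conj w * z) ^ 2) z := by
  refine (((hasDerivAt_id z).sub_const w).fun_div
    (((hasDerivAt_id z).const_mul (conj w)).const_sub 1) h).congr_deriv ?_
  push_cast
  rw [← conj_mul', id]
  ring

lemma differentiableOn_blaschkeFactor (hw : ‖w‖ < 1) :
    DifferentiableOn ℂ (blaschkeFactor w) (closedBall 0 1) := fun z hz =>
  (hasDerivAt_blaschkeFactor (one_sub_conj_mul_ne_zero hw (by simpa using hz))).differentiableAt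
    |>.differentiableWithinAt

lemma circleAverage_blaschkeFactor (hw : ‖w‖ < 1) :
    circleAverage (blaschkeFactor w) 0 1 = -w := by
  have hd : DiffContOnCl ℂ (blaschkeFactor w) (ball 0 |1|) := by
    rw [abs_one]
    exact (differentiableOn_blaschkeFactor hw).diffContOnCl_ball le_rfl
  rw [hd.circleAverage, blaschkeFactor_zero_right]

end BlaschkeFactor

section PoissonKernel

variable {w : ℂ}

lemma circleAverage_poissonKernel {c : ℂ} {R : ℝ} (hw : w ∈ ball c R) :
    circleAverage (poissonKernel c w) c R = 1 := by
  simpa [Pi.mul_def] using InnerProductSpace.HarmonicContOnCl.circleAverage_poissonKernel_smul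
    (InnerProductSpace.harmonicContOnCl_const (c := (1 : ℝ))) hw

lemma poissonKernel_circleMap_pos (hw : ‖w‖ < 1) (t : ℝ) :
    0 < poissonKernel 0 w (circleMap 0 1 t) := by
  have hne := circleMap_ne_mem_ball (mem_ball_zero_iff.2 hw) t
  simp only [poissonKernel, sub_zero, norm_circleMap_zero, abs_one]
  apply div_pos
  · nlinarith [norm_nonneg w]
  · exact pow_pos (norm_pos_iff.2 (sub_ne_zero.2 hne)) 2

lemma continuous_poissonKernel_circleMap (hw : ‖w‖ < 1) :
    Continuous fun t => poissonKernel 0 w (circleMap 0 1 t) := by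
  simp only [poissonKernel, sub_zero]
  refine Continuous.div (by fun_prop) (by fun_prop) fun t => pow_ne_zero 2 ?_
  exact norm_ne_zero_iff.2 (sub_ne_zero.2 (circleMap_ne_mem_ball (mem_ball_zero_iff.2 hw) t))

lemma integral_poissonKernel_circleMap (hw : ‖w‖ < 1) :
    ∫ t in 0..2 * π, poissonKernel 0 w (circleMap 0 1 t) = 2 * π := by
  have := circleAverage_poissonKernel (c := 0) (R := 1) (mem_ball_zero_iff.2 hw)
  rwa [circleAverage_def, smul_eq_mul, inv_mul_eq_one₀ two_pi_pos.ne', eq_comm] at this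

end PoissonKernel

noncomputable def poissonPrimitive (w : ℂ) (y : ℝ) : ℝ :=
  ∫ t in 0..y, poissonKernel 0 w (circleMap 0 1 t)

section PoissonPrimitive

variable {w : ℂ}

lemma poissonPrimitive_sub (hw : ‖w‖ < 1) (a b : ℝ) :
    poissonPrimitive w b - poissonPrimitive w a =
      ∫ t in a..b, poissonKernel 0 w (circleMap 0 1 t) :=
  integral_interval_sub_left ((continuous_poissonKernel_circleMap hw).intervalIntegrable _ _)
    ((continuous_poissonKernel_circleMap hw).intervalIntegrable _ _)

lemma continuous_poissonPrimitive (hw : ‖w‖ < 1) : Continuous (poissonPrimitive w) :=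
  continuous_primitive (fun _ _ => (continuous_poissonKernel_circleMap hw).intervalIntegrable _ _) 0

lemma strictMono_poissonPrimitive (hw : ‖w‖ < 1) : StrictMono (poissonPrimitive w) := by
  intro a b hab
  rw [← sub_pos, poissonPrimitive_sub hw]
  exact intervalIntegral_pos_of_pos_on
    ((continuous_poissonKernel_circleMap hw).intervalIntegrable _ _)
    (fun t _ => poissonKernel_circleMap_pos hw t) hab

lemma poissonPrimitive_add_two_pi (hw : ‖w‖ < 1) (y : ℝ) :
    poissonPrimitive w (y + 2 * π) = poissonPrimitive w y + 2 * π := by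
  have hper : Function.Periodic (fun t => poissonKernel 0 w (circleMap 0 1 t)) (2 * π) :=
    (periodic_circleMap 0 1).comp (poissonKernel 0 w)
  rw [poissonPrimitive, hper.intervalIntegral_add_eq_add 0 y
    (fun _ _ => (continuous_poissonKernel_circleMap hw).intervalIntegrable _ _), zero_add,
    integral_poissonKernel_circleMap hw, poissonPrimitive]

end PoissonPrimitive

section BlaschkeFactorOnCircle

variable {w : ℂ}

lemma hasDerivAt_blaschkeFactor_circleMap (hw : ‖w‖ < 1) (t : ℝ) :
    HasDerivAt (fun t => blaschkeFactor w (circleMap 0 1 t))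
      (((1 - ‖w‖ ^ 2 : ℝ) : ℂ) / (1 - conj w * circleMap 0 1 t) ^ 2 *
        (circleMap 0 1 t * I)) t :=
  (hasDerivAt_blaschkeFactor (one_sub_conj_mul_ne_zero hw (by simp))).comp t
    (hasDerivAt_circleMap 0 1 t)

lemma norm_blaschkeFactor_circleMap_sub_le (hw : ‖w‖ < 1) (a b : ℝ) :
    ‖blaschkeFactor w (circleMap 0 1 b) - blaschkeFactor w (circleMap 0 1 a)‖ ≤
      |poissonPrimitive w b - poissonPrimitive w a| := by
  have hcont : Continuous fun t => ((1 - ‖w‖ ^ 2 : ℝ) : ℂ) /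
      (1 - conj w * circleMap 0 1 t) ^ 2 * (circleMap 0 1 t * I) :=
    ((continuous_const.div (by fun_prop) fun t =>
      pow_ne_zero 2 (one_sub_conj_mul_ne_zero hw (by simp))).mul (by fun_prop))
  have hnorm : ∀ t, ‖((1 - ‖w‖ ^ 2 : ℝ) : ℂ) / (1 - conj w * circleMap 0 1 t) ^ 2 *
      (circleMap 0 1 t * I)‖ = poissonKernel 0 w (circleMap 0 1 t) := by
    intro t
    have h1 : 0 ≤ 1 - ‖w‖ ^ 2 := by nlinarith [norm_nonneg w]
    rw [norm_mul, norm_div, norm_pow, norm_one_sub_conj_mul (by simp), norm_real,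
      Real.norm_of_nonneg h1, norm_mul, norm_I, poissonKernel]
    simp
  rw [poissonPrimitive_sub hw, ← integral_congr fun t _ => hnorm t]
  exact norm_sub_le_abs_integral_norm_deriv (hasDerivAt_blaschkeFactor_circleMap hw) hcont a b

end BlaschkeFactorOnCircle

lemma integral_poissonPrimitive_add_sub_sub {w : ℂ} (hw : ‖w‖ < 1) (c : ℝ) :
    ∫ x in 0..2 * π, (poissonPrimitive w (x + c) - poissonPrimitive w (x - c)) = 4 * π * c := by
  have hQ := continuous_poissonPrimitive hw
  have hi : ∀ s, IntervalIntegrable (fun x => poissonPrimitive w (x + s)) volume 0 (2 * π) :=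
    fun s => (hQ.comp (continuous_add_const s)).intervalIntegrable _ _
  have key := integral_comp_add_right_of_add_period hQ (poissonPrimitive_add_two_pi hw) 0
  simp only [sub_eq_add_neg _ c, zero_add, smul_eq_mul] at key ⊢
  rw [integral_sub (hi c) (hi (-c)), key c, key (-c)]
  ring

lemma exists_eq_circleMap_add_of_dS1_lt {z : ℂ} (hz : ‖z‖ = 1) {x ε : ℝ}
    (h : dS1 z (circleMap 0 1 x) < ε) : ∃ θ, |θ| < ε ∧ z = circleMap 0 1 (x + θ) := by
  have hexp : ∀ v : ℂ, ‖v‖ = 1 → v = exp (I * v.arg) := fun v hv => by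
    simpa [hv, mul_comm] using (norm_mul_exp_arg_mul_I v).symm
  obtain ⟨_, ⟨x₁, x₂, rfl, hx₂, rfl⟩, hlt⟩ := exists_lt_of_csInf_lt
    (by exact ⟨_, z.arg, (circleMap 0 1 x).arg, hexp z hz, hexp _ (by simp), rfl⟩) h
  refine ⟨x₁ - x₂, hlt, ?_⟩
  calc exp (I * x₁) = exp (I * x₂) * exp ((x₁ - x₂ : ℝ) * I) := by
        rw [← Complex.exp_add]; push_cast; ring_nf
    _ = circleMap 0 1 (x + (x₁ - x₂)) := by
        rw [← hx₂]; simp [circleMap, ← Complex.exp_add, add_mul]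

lemma norm_blaschkeFactor_sub_lt_of_dS1_lt {w z : ℂ} (hw : ‖w‖ < 1) (hz : ‖z‖ = 1)
    {x ε : ℝ} (h : dS1 z (circleMap 0 1 x) < ε) :
    ‖blaschkeFactor w z - blaschkeFactor w (circleMap 0 1 x)‖ <
      poissonPrimitive w (x + ε) - poissonPrimitive w (x - ε) := by
  obtain ⟨θ, hθ, rfl⟩ := exists_eq_circleMap_add_of_dS1_lt hz h
  obtain ⟨hθl, hθu⟩ := abs_lt.1 hθ
  have hQ := strictMono_poissonPrimitive hw
  refine (norm_blaschkeFactor_circleMap_sub_le hw x (x + θ)).trans_lt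
    (abs_sub_lt_iff.2 ⟨?_, ?_⟩)
  · linarith [hQ (by linarith : x - ε < x), hQ (by linarith : x + θ < x + ε)]
  · linarith [hQ (by linarith : x < x + ε), hQ (by linarith : x - ε < x + θ)]

lemma avgMap_eq_circleAverage (φ : ℂ → ℂ) (w : ℂ) :
    avgMap φ w = circleAverage (fun z => blaschkeFactor w (φ z)) 0 1 := by
  simp [avgMap, circleAverage_def, blaschkeFactor, circleMap, mul_comm I]

lemma avgMap_id {w : ℂ} (hw : ‖w‖ < 1) : avgMap (fun z => z) w = -w := by
  rw [avgMap_eq_circleAverage]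
  exact circleAverage_blaschkeFactor hw

lemma norm_avgMap_add_lt {ε : ℝ} {φ : ℂ → ℂ} (hcont : ContinuousOn φ {z : ℂ | ‖z‖ = 1})
    (hmaps : ∀ ζ : ℂ, ‖ζ‖ = 1 → ‖φ ζ‖ = 1)
    (hclose : ∀ ζ : ℂ, ‖ζ‖ = 1 → dS1 (φ ζ) ζ < ε)
    {w : ℂ} (hw : ‖w‖ < 1) : ‖avgMap φ w + w‖ < 2 * ε := by
  have hB := (differentiableOn_blaschkeFactor hw).continuousOn
  have hφ : Continuous fun x => φ (circleMap 0 1 x) :=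
    hcont.comp_continuous (continuous_circleMap 0 1) fun x => by simp
  have hBφ : Continuous fun x => blaschkeFactor w (φ (circleMap 0 1 x)) :=
    hB.comp_continuous hφ fun x => by simp [hmaps _ (by simp : ‖circleMap 0 1 x‖ = 1)]
  have hBc : Continuous fun x => blaschkeFactor w (circleMap 0 1 x) :=
    hB.comp_continuous (continuous_circleMap 0 1) fun x => by simp
  have hpoint : ∀ x,
      ‖blaschkeFactor w (φ (circleMap 0 1 x)) - blaschkeFactor w (circleMap 0 1 x)‖ <
        poissonPrimitive w (x + ε) - poissonPrimitive w (x - ε) := fun x =>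
    norm_blaschkeFactor_sub_lt_of_dS1_lt hw (hmaps _ (by simp)) (hclose _ (by simp))
  have hQ := continuous_poissonPrimitive hw
  have hint : ∫ x in 0..2 * π,
        ‖blaschkeFactor w (φ (circleMap 0 1 x)) - blaschkeFactor w (circleMap 0 1 x)‖ <
      ∫ x in 0..2 * π, (poissonPrimitive w (x + ε) - poissonPrimitive w (x - ε)) :=
    integral_lt_integral_of_continuousOn_of_le_of_exists_lt two_pi_pos
      ((hBφ.sub hBc).norm.continuousOn)
      ((hQ.comp (continuous_add_const ε)).sub (hQ.comp (continuous_sub_right ε))).continuousOn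
      (fun x _ => (hpoint x).le) ⟨0, by simp [two_pi_pos.le], hpoint 0⟩
  rw [integral_poissonPrimitive_add_sub_sub hw] at hint
  rw [← sub_neg_eq_add, ← circleAverage_blaschkeFactor hw, avgMap_eq_circleAverage,
    circleAverage_def, circleAverage_def, ← smul_sub,
    ← integral_sub (hBφ.intervalIntegrable _ _) (hBc.intervalIntegrable _ _), norm_smul]
  calc ‖(2 * π)⁻¹‖ * ‖∫ x in 0..2 * π,
          (blaschkeFactor w (φ (circleMap 0 1 x)) - blaschkeFactor w (circleMap 0 1 x))‖
      ≤ (2 * π)⁻¹ * ∫ x in 0..2 * π,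
          ‖blaschkeFactor w (φ (circleMap 0 1 x)) - blaschkeFactor w (circleMap 0 1 x)‖ := by
        rw [Real.norm_of_nonneg (by positivity)]
        gcongr
        exact norm_integral_le_integral_norm two_pi_pos.le
    _ < (2 * π)⁻¹ * (4 * π * ε) := by gcongr
    _ = 2 * ε := by field_simp; ring

theorem stmt_7_general (ε : ℝ) (φ : ℂ → ℂ)
    (hcont : ContinuousOn φ {z : ℂ | ‖z‖ = 1})
    (hmaps : ∀ ζ : ℂ, ‖ζ‖ = 1 → ‖φ ζ‖ = 1)
    (hclose : ∀ ζ : ℂ, ‖ζ‖ = 1 → dS1 (φ ζ) ζ < ε) :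
    ∀ w : ℂ, ‖w‖ < 1 →
      ‖avgMap φ w - avgMap (fun z => z) w‖ < 2 * ε ∧
      ‖avgMap φ w + w‖ < 2 * ε := by
  intro w hw
  have h := norm_avgMap_add_lt hcont hmaps hclose hw
  rw [avgMap_id hw, sub_neg_eq_add]
  exact ⟨h, h⟩

/-- If `φ : S¹ → S¹` is continuous with `d_{S¹}(φ(ζ), ζ) < ε` for all
`ζ ∈ S¹`, then `|ξ_φ(w) − ξ_id(w)| < 2ε` for every `w ∈ 𝔻`; equivalently, since
`ξ_id(w) = −w`, `|ξ_φ(w) + w| < 2ε`. -/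
theorem stmt_7 (ε : ℝ) (hε : 0 < ε) (φ : ℂ → ℂ)
    (hcont : ContinuousOn φ {z : ℂ | ‖z‖ = 1})
    (hmaps : ∀ ζ : ℂ, ‖ζ‖ = 1 → ‖φ ζ‖ = 1)
    (hclose : ∀ ζ : ℂ, ‖ζ‖ = 1 → dS1 (φ ζ) ζ < ε) :
    ∀ w : ℂ, ‖w‖ < 1 →
      ‖avgMap φ w - avgMap (fun z => z) w‖ < 2 * ε ∧
      ‖avgMap φ w + w‖ < 2 * ε :=
  stmt_7_general ε φ hcont hmaps hclose
end

section
/- Let 0 ≤ r < 1, set R = (1 + r)/(1 − r), and let g be a Möbius transformation of the unit disk, g(z) = e^{iθ}·(z − a)/(1 − ā·z) with θ ∈ ℝ and a ∈ 𝔻 satisfying |a| ≤ r. Let ε > 0 and let ψ : S¹ → S¹ be continuous with d_{S¹}(ψ(ζ), ζ) < ε for every ζ ∈ S¹. Then d_{S¹}(g(ψ(g^{-1}(ζ))), ζ) < R·ε for every ζ ∈ S¹. -/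
open Complex ComplexConjugate

noncomputable def mobius (θ : ℝ) (a z : ℂ) : ℂ :=
  exp (I * θ) * (z - a) / (1 - conj a * z)

noncomputable def mobiusInv (θ : ℝ) (a ζ : ℂ) : ℂ :=
  (exp (-(I * θ)) * ζ + a) / (1 + conj a * (exp (-(I * θ)) * ζ))

noncomputable def mobiusLift (θ : ℝ) (a : ℂ) (t : ℝ) : ℝ :=
  θ + t - 2 * arg (1 - conj a * exp (I * t))

lemma norm_conj_mul_exp_I_mul (a : ℂ) (t : ℝ) : ‖conj a * exp (I * t)‖ = ‖a‖ := by
  rw [norm_mul, norm_exp_I_mul_ofReal, norm_conj, mul_one]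

lemma one_sub_conj_mul_exp_I_mul_mem_slitPlane {a : ℂ} (ha : ‖a‖ < 1) (t : ℝ) :
    1 - conj a * exp (I * t) ∈ slitPlane := by
  rw [sub_eq_add_neg]
  exact mem_slitPlane_of_norm_lt_one (by rwa [norm_neg, norm_conj_mul_exp_I_mul])

lemma conj_div_self_eq_exp_arg {w : ℂ} (hw : w ≠ 0) : conj w / w = exp (-(2 * I * arg w)) := by
  have hpolar := norm_mul_exp_arg_mul_I w
  generalize arg w = φ at hpolar ⊢
  generalize ‖w‖ = ρ at hpolar
  subst hpolar
  rw [div_eq_iff hw, map_mul, conj_ofReal, ← exp_conj, map_mul, conj_ofReal, conj_I,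
    mul_left_comm, ← exp_add]
  ring_nf

lemma mobius_exp_I_mul (θ : ℝ) {a : ℂ} (ha : ‖a‖ < 1) (t : ℝ) :
    mobius θ a (exp (I * t)) = exp (I * mobiusLift θ a t) := by
  have hw := slitPlane_ne_zero (one_sub_conj_mul_exp_I_mul_mem_slitPlane ha t)
  have hnum : exp (I * t) - a = exp (I * t) * conj (1 - conj a * exp (I * t)) := by
    rw [map_sub, map_one, map_mul, conj_conj, ← exp_conj, map_mul, conj_I, conj_ofReal,
      mul_sub, mul_one, mul_left_comm, ← exp_add, neg_mul, add_neg_cancel, exp_zero, mul_one]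
  unfold mobius mobiusLift
  rw [hnum, mul_div_assoc, mul_div_assoc, conj_div_self_eq_exp_arg hw, ← exp_add, ← exp_add]
  push_cast
  ring_nf

lemma re_one_add_div_one_sub (u : ℂ) :
    ((1 + u) / (1 - u)).re = (1 - ‖u‖ ^ 2) / ‖1 - u‖ ^ 2 := by
  rw [Complex.sq_norm, Complex.sq_norm, div_re, normSq_apply, normSq_apply]
  simp only [add_re, one_re, sub_re, sub_im, one_im, zero_sub, mul_neg, neg_mul, neg_neg, add_im,
    zero_add]
  field_simp
  ring

lemma hasDerivAt_mobiusLift (θ : ℝ) {a : ℂ} (ha : ‖a‖ < 1) (t : ℝ) :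
    HasDerivAt (mobiusLift θ a) ((1 - ‖a‖ ^ 2) / ‖1 - conj a * exp (I * t)‖ ^ 2) t := by
  set u := conj a * exp (I * t)
  have hu : HasDerivAt (fun s : ℝ => conj a * exp (I * s)) (I * u) t := by
    have := (((hasDerivAt_id (t : ℂ)).const_mul I).cexp.const_mul (conj a)).comp_ofReal
    simpa [u, mul_comm, mul_left_comm, mul_assoc] using this
  have hlog := (hu.const_sub 1).clog_real (one_sub_conj_mul_exp_I_mul_mem_slitPlane ha t)
  have harg :
      HasDerivAt (fun s : ℝ => arg (1 - conj a * exp (I * s))) (-(I * u) / (1 - u)).im t := by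
    have e : (fun s : ℝ => arg (1 - conj a * exp (I * s))) =
        imCLM ∘ fun s : ℝ => log (1 - conj a * exp (I * s)) := by
      ext s; simp [log_im]
    rw [e]
    exact imCLM.hasFDerivAt.comp_hasDerivAt t hlog
  have := ((hasDerivAt_id t).const_add θ).sub (harg.const_mul 2)
  refine this.congr_deriv ?_
  have hu1 : 1 - u ≠ 0 := slitPlane_ne_zero (one_sub_conj_mul_exp_I_mul_mem_slitPlane ha t)
  rw [← norm_conj_mul_exp_I_mul a t, ← re_one_add_div_one_sub,
    show (1 + u) / (1 - u) = 1 + 2 * (u / (1 - u)) by field_simp; ring,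
    show -(I * u) / (1 - u) = -I * (u / (1 - u)) by ring]
  simp

lemma one_sub_norm_sq_div_norm_one_sub_sq_le {u : ℂ} (hu : ‖u‖ < 1) :
    (1 - ‖u‖ ^ 2) / ‖1 - u‖ ^ 2 ≤ (1 + ‖u‖) / (1 - ‖u‖) := by
  have hpos : 0 < 1 - ‖u‖ := by linarith
  have hle : 1 - ‖u‖ ≤ ‖1 - u‖ := by simpa using norm_sub_norm_le (1 : ℂ) u
  calc (1 - ‖u‖ ^ 2) / ‖1 - u‖ ^ 2
      ≤ (1 - ‖u‖ ^ 2) / (1 - ‖u‖) ^ 2 := by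
        gcongr
        nlinarith [norm_nonneg u]
    _ = (1 + ‖u‖) / (1 - ‖u‖) := by field_simp; ring

lemma abs_mobiusLift_sub_le (θ : ℝ) {a : ℂ} (ha : ‖a‖ < 1) (x y : ℝ) :
    |mobiusLift θ a x - mobiusLift θ a y| ≤ (1 + ‖a‖) / (1 - ‖a‖) * |x - y| := by
  refine Convex.norm_image_sub_le_of_norm_hasDerivWithin_le
    (fun t _ => (hasDerivAt_mobiusLift θ ha t).hasDerivWithinAt) (fun t _ => ?_) convex_univ
    (Set.mem_univ y) (Set.mem_univ x)
  rw [Real.norm_of_nonneg (div_nonneg (by nlinarith [norm_nonneg a]) (sq_nonneg _)),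
    ← norm_conj_mul_exp_I_mul a t]
  exact one_sub_norm_sq_div_norm_one_sub_sq_le ((norm_conj_mul_exp_I_mul a t).trans_lt ha)

lemma dS1_exp_I_mul_le (x y : ℝ) : dS1 (exp (I * x)) (exp (I * y)) ≤ |x - y| :=
  csInf_le ⟨0, by rintro d ⟨x, y, -, -, rfl⟩; positivity⟩ ⟨x, y, rfl, rfl, rfl⟩

lemma exists_exp_I_mul_of_norm_eq_one {z : ℂ} (hz : ‖z‖ = 1) :
    ∃ x : ℝ, z = exp (I * x) := by
  obtain ⟨x, hx⟩ := (norm_eq_one_iff z).1 hz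
  exact ⟨x, by rw [← hx, mul_comm]⟩

lemma exists_lt_of_dS1_lt {z w : ℂ} (hz : ‖z‖ = 1) (hw : ‖w‖ = 1) {ε : ℝ}
    (h : dS1 z w < ε) :
    ∃ x y : ℝ, z = exp (I * x) ∧ w = exp (I * y) ∧ |x - y| < ε := by
  obtain ⟨x, hx⟩ := exists_exp_I_mul_of_norm_eq_one hz
  obtain ⟨y, hy⟩ := exists_exp_I_mul_of_norm_eq_one hw
  obtain ⟨-, ⟨x, y, hx, hy, rfl⟩, hlt⟩ :=
    exists_lt_of_csInf_lt (by exact ⟨_, x, y, hx, hy, rfl⟩) h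
  exact ⟨x, y, hx, hy, hlt⟩

lemma norm_mobius_of_norm_eq_one (θ : ℝ) {a z : ℂ} (ha : ‖a‖ < 1) (hz : ‖z‖ = 1) :
    ‖mobius θ a z‖ = 1 := by
  obtain ⟨t, rfl⟩ := exists_exp_I_mul_of_norm_eq_one hz
  rw [mobius_exp_I_mul θ ha, norm_exp_I_mul_ofReal]

lemma mobiusInv_eq_mobius (θ : ℝ) (a ζ : ℂ) :
    mobiusInv θ a ζ = mobius 0 (-a) (exp (-(I * θ)) * ζ) := by
  simp [mobius, mobiusInv]

lemma norm_mobiusInv_of_norm_eq_one (θ : ℝ) {a ζ : ℂ} (ha : ‖a‖ < 1)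
    (hζ : ‖ζ‖ = 1) :
    ‖mobiusInv θ a ζ‖ = 1 := by
  rw [mobiusInv_eq_mobius]
  refine norm_mobius_of_norm_eq_one 0 (by rwa [norm_neg]) ?_
  rw [norm_mul, hζ, mul_one, ← mul_neg, ← ofReal_neg, norm_exp_I_mul_ofReal]

lemma mobius_mobiusInv (θ : ℝ) {a ζ : ℂ} (ha : ‖a‖ < 1) (hζ : ‖ζ‖ ≤ 1) :
    mobius θ a (mobiusInv θ a ζ) = ζ := by
  have hE : exp (I * θ) * exp (-(I * θ)) = 1 := by rw [← exp_add]; simp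
  have hD : 1 + conj a * (exp (-(I * θ)) * ζ) ≠ 0 := by
    refine slitPlane_ne_zero (mem_slitPlane_of_norm_lt_one ?_)
    rw [norm_mul, norm_mul, norm_conj, ← mul_neg, ← ofReal_neg, norm_exp_I_mul_ofReal, one_mul]
    nlinarith [norm_nonneg a, norm_nonneg ζ]
  have haa : 1 - conj a * a ≠ 0 := by
    rw [sub_eq_add_neg]
    refine slitPlane_ne_zero (mem_slitPlane_of_norm_lt_one ?_)
    rw [norm_neg, norm_mul, norm_conj]
    nlinarith [norm_nonneg a]
  unfold mobius mobiusInv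
  generalize exp (I * θ) = e at hE ⊢
  generalize exp (-(I * θ)) = E at hE hD ⊢
  have hden : 1 - conj a * ((E * ζ + a) / (1 + conj a * (E * ζ))) =
      (1 - conj a * a) / (1 + conj a * (E * ζ)) := by
    rw [eq_div_iff hD, sub_mul, mul_assoc, div_mul_cancel₀ _ hD]; ring
  have hnum : (E * ζ + a) / (1 + conj a * (E * ζ)) - a =
      E * ζ * (1 - conj a * a) / (1 + conj a * (E * ζ)) := by
    rw [eq_div_iff hD, sub_mul, div_mul_cancel₀ _ hD]; ring
  rw [hnum, hden, mul_div_assoc, div_div_div_cancel_right₀ hD, mul_div_cancel_right₀ _ haa,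
    ← mul_assoc, hE, one_mul]

theorem stmt_15_general (r : ℝ) (hr1 : r < 1) (θ : ℝ) (a : ℂ)
    (ha : ‖a‖ ≤ r) (ε : ℝ) (ψ : ℂ → ℂ)
    (hmaps : ∀ ζ : ℂ, ‖ζ‖ = 1 → ‖ψ ζ‖ = 1)
    (hclose : ∀ ζ : ℂ, ‖ζ‖ = 1 → dS1 (ψ ζ) ζ < ε) :
    ∀ ζ : ℂ, ‖ζ‖ = 1 →
      dS1
        (Complex.exp (Complex.I * (θ : ℂ)) *
          (ψ ((Complex.exp (-(Complex.I * (θ : ℂ))) * ζ + a) /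
              (1 + (starRingEnd ℂ) a * (Complex.exp (-(Complex.I * (θ : ℂ))) * ζ))) - a) /
          (1 - (starRingEnd ℂ) a *
            ψ ((Complex.exp (-(Complex.I * (θ : ℂ))) * ζ + a) /
              (1 + (starRingEnd ℂ) a * (Complex.exp (-(Complex.I * (θ : ℂ))) * ζ)))))
        ζ < ((1 + r) / (1 - r)) * ε := by
  intro ζ hζ
  have ha1 : ‖a‖ < 1 := ha.trans_lt hr1
  show dS1 (mobius θ a (ψ (mobiusInv θ a ζ))) ζ < _
  have hinv : mobius θ a (mobiusInv θ a ζ) = ζ := mobius_mobiusInv θ ha1 hζ.le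
  have hw := norm_mobiusInv_of_norm_eq_one θ ha1 hζ
  generalize mobiusInv θ a ζ = w at hinv hw ⊢
  subst hinv
  obtain ⟨x, y, hx, hy, hxy⟩ := exists_lt_of_dS1_lt (hmaps _ hw) hw (hclose _ hw)
  have hconst : (1 + ‖a‖) / (1 - ‖a‖) ≤ (1 + r) / (1 - r) := by
    rw [div_le_div_iff₀ (by linarith) (by linarith)]
    linarith
  rw [hx, hy, mobius_exp_I_mul θ ha1, mobius_exp_I_mul θ ha1]
  calc _ ≤ |mobiusLift θ a x - mobiusLift θ a y| := dS1_exp_I_mul_le _ _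
    _ ≤ (1 + ‖a‖) / (1 - ‖a‖) * |x - y| := abs_mobiusLift_sub_le θ ha1 x y
    _ < (1 + r) / (1 - r) * ε :=
      mul_lt_mul' hconst hxy (abs_nonneg _) (div_pos (by linarith [norm_nonneg a]) (by linarith))

/-- Let `0 ≤ r < 1`, `R = (1 + r)/(1 − r)`, and let
`g(z) = e^{iθ}·(z − a)/(1 − ā·z)` be a Möbius transformation of the disk with
`|a| ≤ r`, whose inverse is `g⁻¹(ζ) = (e^{−iθ}ζ + a)/(1 + ā·e^{−iθ}ζ)`.
If `ψ : S¹ → S¹` is continuous with `d_{S¹}(ψ(ζ), ζ) < ε` on `S¹`, then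
`d_{S¹}(g(ψ(g⁻¹(ζ))), ζ) < R·ε` for every `ζ ∈ S¹`. -/
theorem stmt_15 (r : ℝ) (hr0 : 0 ≤ r) (hr1 : r < 1) (θ : ℝ) (a : ℂ)
    (ha : ‖a‖ ≤ r) (ε : ℝ) (hε : 0 < ε) (ψ : ℂ → ℂ)
    (hcont : ContinuousOn ψ {z : ℂ | ‖z‖ = 1})
    (hmaps : ∀ ζ : ℂ, ‖ζ‖ = 1 → ‖ψ ζ‖ = 1)
    (hclose : ∀ ζ : ℂ, ‖ζ‖ = 1 → dS1 (ψ ζ) ζ < ε) :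
    ∀ ζ : ℂ, ‖ζ‖ = 1 →
      dS1
        (Complex.exp (Complex.I * (θ : ℂ)) *
          (ψ ((Complex.exp (-(Complex.I * (θ : ℂ))) * ζ + a) /
              (1 + (starRingEnd ℂ) a * (Complex.exp (-(Complex.I * (θ : ℂ))) * ζ))) - a) /
          (1 - (starRingEnd ℂ) a *
            ψ ((Complex.exp (-(Complex.I * (θ : ℂ))) * ζ + a) /
              (1 + (starRingEnd ℂ) a * (Complex.exp (-(Complex.I * (θ : ℂ))) * ζ)))))
        ζ < ((1 + r) / (1 - r)) * ε :=
  stmt_15_general r hr1 θ a ha ε ψ hmaps hclose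
end

section
/- Let z be in the open unit disk 𝔻 and let F : S¹ → ℂ be continuous. Then (1/2π)·∫₀^{2π} F(γ_z^{-1}(e^{ix})) dx = (1/2π)·∫₀^{2π} F(e^{ix})·(1 − |z|²)/|e^{ix} − z|² dx, where γ_z^{-1}(ζ) = (ζ + z)/(1 + z̄·ζ). -/
/-!
Write `γ_z⁻¹(e^{it}) = e^{iψ(t)}` with `ψ(t) = t − 2 arg(1 + z̄ e^{it})`. Since `|z| < 1`, the
point `1 + z̄ e^{it}` stays in the right half-plane, so `ψ` is smooth and gains exactly `2π` over a
period. With `w = z̄ e^{it}`, its derivative is `Re((1 − w)/(1 + w)) = (1 − |z|²)/|1 + z̄ e^{it}|²`,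
the reciprocal of the Poisson kernel `(1 − |z|²)/|ζ − z|²` at `ζ = γ_z⁻¹(e^{it})`. Hence the
substitution `x = ψ(t)` in the `2π`-periodic integral of `F(e^{ix})·P(z, e^{ix})` yields the
left side.
-/

open Complex ComplexConjugate Function intervalIntegral
open scoped Real

theorem Function.Periodic.intervalIntegral_deriv_smul_comp {E : Type*} [NormedAddCommGroup E]
    [NormedSpace ℝ E] {g : ℝ → E} {T : ℝ} (hg : Periodic g T) (hgc : Continuous g)
    {f f' : ℝ → ℝ} (hf : ∀ x ∈ Set.uIcc 0 T, HasDerivAt f (f' x) x)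
    (hf' : ContinuousOn f' (Set.uIcc 0 T)) (hfT : f T = f 0 + T) :
    ∫ x in 0..T, f' x • g (f x) = ∫ x in 0..T, g x :=
  (integral_deriv_smul_comp hf hf' hgc).trans <| by
    rw [hfT, hg.intervalIntegral_add_eq (f 0) 0, zero_add]

theorem exp_I_mul_periodic : Periodic (fun x : ℝ => exp (I * x)) (2 * π) := fun x => by
  simpa [mul_comm I] using exp_mul_I_periodic (x : ℂ)

theorem exp_I_mul_sub_ne_zero {z : ℂ} (hz : ‖z‖ < 1) (x : ℝ) : exp (I * x) - z ≠ 0 :=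
  sub_ne_zero.mpr fun h => hz.ne (h ▸ norm_exp_I_mul_ofReal x)

theorem re_one_sub_div_one_add (w : ℂ) :
    ((1 - w) / (1 + w)).re = (1 - ‖w‖ ^ 2) / ‖1 + w‖ ^ 2 := by
  rw [div_re, Complex.sq_norm, Complex.sq_norm, normSq_apply, normSq_apply]
  simp only [sub_re, add_re, one_re, sub_im, add_im, one_im]
  ring

theorem moebius_inv_sub (z ζ : ℂ) (h : 1 + conj z * ζ ≠ 0) :
    (ζ + z) / (1 + conj z * ζ) - z = (1 - ‖z‖ ^ 2) * ζ / (1 + conj z * ζ) := by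
  rw [div_sub' h, ← mul_conj']
  ring_nf

theorem norm_moebius_inv_sub {z ζ : ℂ} (hz : ‖z‖ ≤ 1) (hζ : ‖ζ‖ = 1) (h : 1 + conj z * ζ ≠ 0) :
    ‖(ζ + z) / (1 + conj z * ζ) - z‖ = (1 - ‖z‖ ^ 2) / ‖1 + conj z * ζ‖ := by
  rw [moebius_inv_sub z ζ h, norm_div, norm_mul, hζ, mul_one, ← ofReal_pow, ← ofReal_one,
    ← ofReal_sub, norm_real, Real.norm_of_nonneg (by nlinarith [norm_nonneg z])]

theorem one_add_conj_mul_exp_mem_slitPlane {z : ℂ} (hz : ‖z‖ < 1) (t : ℝ) :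
    1 + conj z * exp (I * t) ∈ slitPlane :=
  mem_slitPlane_of_norm_lt_one <| by simpa [norm_exp_I_mul_ofReal] using hz

noncomputable def moebiusAngle (z : ℂ) (t : ℝ) : ℝ := t - 2 * arg (1 + conj z * exp (I * t))

theorem exp_I_mul_moebiusAngle {z : ℂ} (t : ℝ) (h : 1 + conj z * exp (I * t) ≠ 0) :
    exp (I * moebiusAngle z t) = (exp (I * t) + z) / (1 + conj z * exp (I * t)) := by
  set u := 1 + conj z * exp (I * t) with hu
  have hpolar : exp (arg u * I) = u / ‖u‖ := by
    rw [eq_div_iff (by simpa using h), mul_comm, norm_mul_exp_arg_mul_I]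
  have hconj : exp (I * t) * conj u = exp (I * t) + z := by
    have : exp (I * t) * conj (exp (I * t)) = 1 := by
      rw [mul_conj', norm_exp_I_mul_ofReal]; simp
    rw [hu, map_add, map_one, map_mul, conj_conj]
    linear_combination z * this
  have hsplit : I * (moebiusAngle z t : ℂ) = I * t - 2 * (arg u * I) := by
    simp only [moebiusAngle]; push_cast; ring
  rw [hsplit, exp_sub, two_mul, exp_add, hpolar, ← hconj]
  have : (‖u‖ : ℂ) ≠ 0 := by simpa using h
  field_simp
  exact (mul_conj' u).symm

theorem moebiusAngle_add_two_pi (z : ℂ) (t : ℝ) :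
    moebiusAngle z (t + 2 * π) = moebiusAngle z t + 2 * π := by
  simp only [moebiusAngle, exp_I_mul_periodic t]
  ring

theorem hasDerivAt_moebiusAngle {z : ℂ} (hz : ‖z‖ < 1) (t : ℝ) :
    HasDerivAt (moebiusAngle z) ((1 - ‖z‖ ^ 2) / ‖1 + conj z * exp (I * t)‖ ^ 2) t := by
  have hu := one_add_conj_mul_exp_mem_slitPlane hz t
  have hu_deriv : HasDerivAt (fun s : ℝ => 1 + conj z * exp (I * s))
      (I * (conj z * exp (I * t))) t :=
    ((((hasDerivAt_id (t : ℂ)).const_mul I).cexp.const_mul (conj z)).comp_ofReal.const_add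
      1).congr_deriv (by simp only [id, mul_one]; ring)
  have harg : HasDerivAt (fun s : ℝ => arg (1 + conj z * exp (I * s)))
      (I * (conj z * exp (I * t)) / (1 + conj z * exp (I * t))).im t := by
    simpa only [comp_def, imCLM_apply, log_im] using
      imCLM.hasFDerivAt.comp_hasDerivAt t (hu_deriv.clog_real hu)
  generalize hw : conj z * exp (I * t) = w at harg hu
  have hw_norm : ‖w‖ = ‖z‖ := by simp [← hw, norm_exp_I_mul_ofReal]
  have hderiv : 1 - 2 * (I * w / (1 + w)).im = ((1 - w) / (1 + w)).re := by
    rw [show (1 - w) / (1 + w) = 1 - 2 * (w / (1 + w)) by field_simp [slitPlane_ne_zero hu]; ring,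
      mul_div_assoc]
    simp
  rw [← hw_norm, ← re_one_sub_div_one_add, ← hderiv]
  exact (hasDerivAt_id t).sub (harg.const_mul 2)

theorem continuous_moebiusAngle_deriv {z : ℂ} (hz : ‖z‖ < 1) :
    Continuous fun t : ℝ => (1 - ‖z‖ ^ 2) / ‖1 + conj z * exp (I * t)‖ ^ 2 :=
  continuous_const.div (by fun_prop) fun t =>
    pow_ne_zero 2 <| norm_ne_zero_iff.mpr <|
      slitPlane_ne_zero (one_add_conj_mul_exp_mem_slitPlane hz t)

theorem moebiusAngle_deriv_mul_poisson_eq_one {z : ℂ} (hz : ‖z‖ < 1) (t : ℝ) :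
    (1 - ‖z‖ ^ 2) / ‖1 + conj z * exp (I * t)‖ ^ 2 *
      ((1 - ‖z‖ ^ 2) / ‖exp (I * moebiusAngle z t) - z‖ ^ 2) = 1 := by
  have hu := slitPlane_ne_zero (one_add_conj_mul_exp_mem_slitPlane hz t)
  rw [exp_I_mul_moebiusAngle t hu, norm_moebius_inv_sub hz.le (norm_exp_I_mul_ofReal t) hu]
  have : 0 < 1 - ‖z‖ ^ 2 := by nlinarith [norm_nonneg z]
  have : ‖1 + conj z * exp (I * t)‖ ≠ 0 := norm_ne_zero_iff.mpr hu
  field_simp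

/-- For `z` in the open unit disk and continuous `F : S¹ → ℂ`,
`(1/2π)·∫₀^{2π} F(γ_z⁻¹(e^{ix})) dx = (1/2π)·∫₀^{2π} F(e^{ix})·(1 − |z|²)/|e^{ix} − z|² dx`,
where `γ_z⁻¹(ζ) = (ζ + z)/(1 + z̄·ζ)`; the Poisson kernel appears as the Jacobian. -/
theorem stmt_16 (z : ℂ) (hz : ‖z‖ < 1) (F : ℂ → ℂ)
    (hcont : ContinuousOn F {w : ℂ | ‖w‖ = 1}) :
    (1 / (2 * Real.pi)) • ∫ x in (0 : ℝ)..(2 * Real.pi),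
        F ((Complex.exp (Complex.I * (x : ℂ)) + z) /
            (1 + (starRingEnd ℂ) z * Complex.exp (Complex.I * (x : ℂ)))) =
      (1 / (2 * Real.pi)) • ∫ x in (0 : ℝ)..(2 * Real.pi),
        F (Complex.exp (Complex.I * (x : ℂ))) *
          (((1 - ‖z‖ ^ 2) /
            ‖Complex.exp (Complex.I * (x : ℂ)) - z‖ ^ 2 : ℝ) : ℂ) := by
  set G : ℝ → ℂ := fun x => F (exp (I * x)) * (((1 - ‖z‖ ^ 2) / ‖exp (I * x) - z‖ ^ 2 : ℝ) : ℂ)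
    with hG
  have hG_cont : Continuous G :=
    (hcont.comp_continuous (by fun_prop) fun x => norm_exp_I_mul_ofReal x).mul
      (continuous_ofReal.comp (continuous_const.div (by fun_prop) fun x =>
        pow_ne_zero 2 (norm_ne_zero_iff.mpr (exp_I_mul_sub_ne_zero hz x))))
  have hG_per : Periodic G (2 * π) := fun x => by simp only [hG, exp_I_mul_periodic x]
  have hsubst (t : ℝ) : ((1 - ‖z‖ ^ 2) / ‖1 + conj z * exp (I * t)‖ ^ 2) • G (moebiusAngle z t) =
      F ((exp (I * t) + z) / (1 + conj z * exp (I * t))) := by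
    simp only [hG, real_smul]
    rw [mul_left_comm, ← ofReal_mul, moebiusAngle_deriv_mul_poisson_eq_one hz t, ofReal_one,
      mul_one, exp_I_mul_moebiusAngle t <|
        slitPlane_ne_zero (one_add_conj_mul_exp_mem_slitPlane hz t)]
  congr 1
  rw [← hG_per.intervalIntegral_deriv_smul_comp hG_cont (fun t _ => hasDerivAt_moebiusAngle hz t)
    (continuous_moebiusAngle_deriv hz).continuousOn (by simpa using moebiusAngle_add_two_pi z 0)]
  exact integral_congr fun t _ => (hsubst t).symm
end
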